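/- arXiv:1708.09125 — 2 statements merged into one kernel-verified Lean document; each statement's English description precedes it below -/
import Mathlib

section
/- If A* is a global minimizer of Ψ over ℝ^{n+1}, then the convex hulls of G₊(A*) and G₋(A*) in ℝ^{n+1} have nonempty intersection. -/
/-- The modelling function `L(A,x) = a₀ + ∑_{i=1}^n aᵢ gᵢ(x)`. -/
noncomputable def modelFun {d n : ℕ} (g : Fin n → (Fin d → ℝ) → ℝ)
    (A : Fin (n + 1) → ℝ) (x : Fin d → ℝ) : ℝ :=
  A 0 + ∑ i : Fin n, A i.succ * g i x

/-- The uniform approximation error `Ψ(A) = sup_{x ∈ Q} |f(x) − L(A,x)|`. -/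
noncomputable def uniformError {d n : ℕ} (Q : Set (Fin d → ℝ))
    (f : (Fin d → ℝ) → ℝ) (g : Fin n → (Fin d → ℝ) → ℝ)
    (A : Fin (n + 1) → ℝ) : ℝ :=
  sSup ((fun x => |f x - modelFun g A x|) '' Q)

/-- The set of maximal positive deviation points. -/
def Eplus {d n : ℕ} (Q : Set (Fin d → ℝ)) (f : (Fin d → ℝ) → ℝ)
    (g : Fin n → (Fin d → ℝ) → ℝ) (A : Fin (n + 1) → ℝ) : Set (Fin d → ℝ) :=
  {x ∈ Q | f x - modelFun g A x = uniformError Q f g A}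

/-- The set of maximal negative deviation points. -/
def Eminus {d n : ℕ} (Q : Set (Fin d → ℝ)) (f : (Fin d → ℝ) → ℝ)
    (g : Fin n → (Fin d → ℝ) → ℝ) (A : Fin (n + 1) → ℝ) : Set (Fin d → ℝ) :=
  {x ∈ Q | modelFun g A x - f x = uniformError Q f g A}

/-- The vector `(1, g₁(x), …, gₙ(x)) ∈ ℝ^{n+1}`. -/
def gVec {d n : ℕ} (g : Fin n → (Fin d → ℝ) → ℝ) (x : Fin d → ℝ) :
    Fin (n + 1) → ℝ :=
  Fin.cons 1 (fun i => g i x)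

/-- `G₊(A) = {(1,g₁(x),…,gₙ(x)) : x ∈ E₊(A)}`. -/
def Gplus {d n : ℕ} (Q : Set (Fin d → ℝ)) (f : (Fin d → ℝ) → ℝ)
    (g : Fin n → (Fin d → ℝ) → ℝ) (A : Fin (n + 1) → ℝ) :
    Set (Fin (n + 1) → ℝ) :=
  gVec g '' Eplus Q f g A

/-- `G₋(A) = {(1,g₁(x),…,gₙ(x)) : x ∈ E₋(A)}`. -/
def Gminus {d n : ℕ} (Q : Set (Fin d → ℝ)) (f : (Fin d → ℝ) → ℝ)
    (g : Fin n → (Fin d → ℝ) → ℝ) (A : Fin (n + 1) → ℝ) :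
    Set (Fin (n + 1) → ℝ) :=
  gVec g '' Eminus Q f g A

/-!
If the two hulls were disjoint, a hyperplane would separate them strictly (they are compact by
Carathéodory's theorem). Every `gVec g x` has first coordinate `1`, so the separating affine form
evaluated at `gVec g x` is `L(B, x)` for some `B`, positive on `E₊(A*)` and negative on `E₋(A*)`. By compactness, `A* + ε • B` then has uniform error `< Ψ(A*)` for small `ε > 0`: near the
extreme points the perturbation pushes the error away from `±Ψ(A*)`, and elsewhere the error had
slack to begin with.
-/

open Set Topology Function

section Caratheodory

variable {E : Type*} [AddCommGroup E] [Module ℝ E] [FiniteDimensional ℝ E]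

theorem convexHull_eq_image_stdSimplex_prod (s : Set E) :
    convexHull ℝ s =
      (fun p : (Fin (Module.finrank ℝ E + 1) → ℝ) × (Fin (Module.finrank ℝ E + 1) → E) =>
          ∑ i, p.1 i • p.2 i) '' (stdSimplex ℝ _ ×ˢ univ.pi fun _ => s) := by
  refine Subset.antisymm (fun x hx => ?_) ?_
  · obtain ⟨p₀, hp₀⟩ := convexHull_nonempty_iff.1 ⟨x, hx⟩
    obtain ⟨ι, _, z, w, hzs, haff, hw0, hw1, rfl⟩ := eq_pos_convex_span_of_mem_convexHull hx
    have hcard : Fintype.card ι ≤ Fintype.card (Fin (Module.finrank ℝ E + 1)) := by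
      simpa using haff.card_le_finrank_succ.trans
        (Nat.succ_le_succ (Submodule.finrank_le _))
    obtain ⟨e⟩ := Function.Embedding.nonempty_of_card_le hcard
    refine ⟨(extend e w 0, extend e z fun _ => p₀), ⟨⟨fun j => ?_, ?_⟩, fun j _ => ?_⟩, ?_⟩
    · change 0 ≤ extend e w 0 j
      rcases range_extend_subset e w 0 ⟨j, rfl⟩ with ⟨i, hi⟩ | ⟨_, _, hj⟩
      · exact hi ▸ (hw0 i).le
      · exact hj ▸ le_rfl
    · rw [← hw1]
      refine (Fintype.sum_of_injective e e.injective _ _ (fun j hj => ?_)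
        fun i => (e.injective.extend_apply _ _ i).symm).symm
      exact extend_apply' _ _ _ (by simpa using hj)
    · change extend e z (fun _ => p₀) j ∈ s
      rcases range_extend_subset e z _ ⟨j, rfl⟩ with ⟨i, hi⟩ | ⟨_, _, hj⟩
      · exact hi ▸ hzs ⟨i, rfl⟩
      · exact hj ▸ hp₀
    · refine (Fintype.sum_of_injective e e.injective _ _ (fun j hj => ?_)
        fun i => ?_).symm
      · simp [extend_apply' _ _ _ (by simpa using hj : ¬∃ i, e i = j)]
      · simp [e.injective.extend_apply]
  · rintro _ ⟨⟨w, z⟩, ⟨hw, hz⟩, rfl⟩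
    exact (convex_convexHull ℝ s).sum_mem (fun i _ => hw.1 i) hw.2
      fun i _ => subset_convexHull ℝ s (hz i (mem_univ i))

theorem IsCompact.convexHull [TopologicalSpace E] [ContinuousAdd E] [ContinuousSMul ℝ E]
    {s : Set E} (hs : IsCompact s) : IsCompact (_root_.convexHull ℝ s) := by
  rw [convexHull_eq_image_stdSimplex_prod]
  exact ((isCompact_stdSimplex _ _).prod (isCompact_univ_pi fun _ => hs)).image (by fun_prop)

end Caratheodory

theorem exists_dotProduct_neg_pos_of_disjoint_convexHull {ι : Type*} [Fintype ι]
    {s t : Set (ι → ℝ)} (hs : IsCompact s) (ht : IsCompact t) (i₀ : ι)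
    (hs₀ : ∀ v ∈ s, v i₀ = 1) (ht₀ : ∀ v ∈ t, v i₀ = 1)
    (hst : Disjoint (convexHull ℝ s) (convexHull ℝ t)) :
    ∃ B : ι → ℝ, (∀ v ∈ s, B ⬝ᵥ v < 0) ∧ ∀ v ∈ t, 0 < B ⬝ᵥ v := by
  obtain ⟨φ, u, v, hu, huv, hv⟩ := geometric_hahn_banach_compact_closed
    (convex_convexHull ℝ s) hs.convexHull (convex_convexHull ℝ t) ht.convexHull.isClosed hst
  classical
  -- On the hyperplane `w i₀ = 1` the affine separator `φ - (u + v) / 2` agrees with `ψ`.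
  let ψ : (ι → ℝ) →ₗ[ℝ] ℝ := φ.toLinearMap - ((u + v) / 2) • LinearMap.proj i₀
  have hψ : ∀ w, (fun j => ψ (Pi.single j 1)) ⬝ᵥ w = φ w - (u + v) / 2 * w i₀ := by
    intro w
    calc (fun j => ψ (Pi.single j 1)) ⬝ᵥ w = ψ w := by
          conv_rhs => rw [pi_eq_sum_univ' w]
          simp [dotProduct, mul_comm]
      _ = φ w - (u + v) / 2 * w i₀ := rfl
  refine ⟨fun j => ψ (Pi.single j 1), fun w hw => ?_, fun w hw => ?_⟩
  · rw [hψ, hs₀ w hw]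
    linarith [hu w (subset_convexHull ℝ s hw)]
  · rw [hψ, ht₀ w hw]
    linarith [hv w (subset_convexHull ℝ t hw)]

section Perturbation

variable {X : Type*} [TopologicalSpace X] {K : Set X} {e h : X → ℝ} {c : ℝ}

theorem IsCompact.exists_lt_forall_le_of_forall_lt (hK : IsCompact K) (he : ContinuousOn e K)
    (hlt : ∀ x ∈ K, e x < c) : ∃ δ < c, ∀ x ∈ K, e x ≤ δ := by
  rcases K.eq_empty_or_nonempty with rfl | hne
  · exact ⟨c - 1, by linarith, by simp⟩
  · obtain ⟨y, hyK, hy⟩ := hK.exists_isMaxOn hne he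
    exact ⟨e y, hlt y hyK, fun x hx => hy hx⟩

theorem IsCompact.eventually_forall_sub_mul_lt (hK : IsCompact K) (he : Continuous e)
    (hh : Continuous h) (hle : ∀ x ∈ K, e x ≤ c) (hpos : ∀ x ∈ K, e x = c → 0 < h x) :
    ∀ᶠ ε in 𝓝[>] 0, ∀ x ∈ K, e x - ε * h x < c := by
  obtain ⟨δ, hδc, hδ⟩ := IsCompact.exists_lt_forall_le_of_forall_lt
    (hK.inter_right (isClosed_le hh continuous_const)) he.continuousOn fun x ⟨hxK, hx⟩ =>
      (hle x hxK).lt_of_ne fun hc => (hpos x hxK hc).not_ge hx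
  obtain ⟨C, hC⟩ := hK.exists_bound_of_continuousOn hh.continuousOn
  have hε₀ : 0 < (c - δ) / (|C| + 1) := div_pos (sub_pos.2 hδc) (by positivity)
  filter_upwards [Ioo_mem_nhdsGT hε₀] with ε ⟨hε, hεlt⟩ x hx
  rcases lt_or_ge 0 (h x) with hhx | hhx
  · nlinarith [hle x hx]
  · have hCx : -h x ≤ |C| := (neg_le_abs _).trans ((hC x hx).trans (le_abs_self C))
    have : ε * (|C| + 1) < c - δ := (lt_div_iff₀ (by positivity)).1 hεlt
    nlinarith [hδ x ⟨hx, hhx⟩]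

theorem IsCompact.exists_forall_abs_sub_mul_lt (hK : IsCompact K) (he : Continuous e)
    (hh : Continuous h) (hle : ∀ x ∈ K, |e x| ≤ c) (hpos : ∀ x ∈ K, e x = c → 0 < h x)
    (hneg : ∀ x ∈ K, -e x = c → h x < 0) : ∃ ε, ∀ x ∈ K, |e x - ε * h x| < c := by
  obtain ⟨ε, hup, hlow⟩ := ((hK.eventually_forall_sub_mul_lt he hh
    (fun x hx => (le_abs_self _).trans (hle x hx)) hpos).and
    (hK.eventually_forall_sub_mul_lt he.neg hh.neg (fun x hx => (neg_le_abs _).trans (hle x hx))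
      fun x hx hc => neg_pos.2 (hneg x hx hc))).exists
  exact ⟨ε, fun x hx => abs_lt.2 ⟨by linarith [show -e x - ε * -h x < c from hlow x hx], hup x hx⟩⟩

end Perturbation

section UniformApproximation

variable {d n : ℕ} {Q : Set (Fin d → ℝ)} {f : (Fin d → ℝ) → ℝ} {g : Fin n → (Fin d → ℝ) → ℝ}

theorem modelFun_eq_dotProduct (g : Fin n → (Fin d → ℝ) → ℝ) (A : Fin (n + 1) → ℝ)
    (x : Fin d → ℝ) : modelFun g A x = A ⬝ᵥ gVec g x := by
  simp [modelFun, gVec, dotProduct, Fin.sum_univ_succ]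

theorem modelFun_add_smul (g : Fin n → (Fin d → ℝ) → ℝ) (A B : Fin (n + 1) → ℝ) (ε : ℝ)
    (x : Fin d → ℝ) : modelFun g (A + ε • B) x = modelFun g A x + ε * modelFun g B x := by
  simp only [modelFun_eq_dotProduct, add_dotProduct, smul_dotProduct, smul_eq_mul]

theorem continuous_gVec (hg : ∀ i, Continuous (g i)) : Continuous (gVec g) :=
  continuous_pi fun j => Fin.cases (by simpa [gVec] using continuous_const)
    (fun i => by simpa [gVec] using hg i) j

theorem continuous_modelFun (hg : ∀ i, Continuous (g i)) (A : Fin (n + 1) → ℝ) :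
    Continuous (modelFun g A) := by
  simp only [funext (modelFun_eq_dotProduct g A)]
  exact continuous_const.dotProduct (continuous_gVec hg)

theorem abs_sub_modelFun_le_uniformError (hQ : IsCompact Q) (hf : Continuous f)
    (hg : ∀ i, Continuous (g i)) (A : Fin (n + 1) → ℝ) {x : Fin d → ℝ} (hx : x ∈ Q) :
    |f x - modelFun g A x| ≤ uniformError Q f g A :=
  le_csSup (hQ.bddAbove_image (hf.sub (continuous_modelFun hg A)).abs.continuousOn) ⟨x, hx, rfl⟩

theorem uniformError_lt_iff (hQne : Q.Nonempty) (hQ : IsCompact Q) (hf : Continuous f)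
    (hg : ∀ i, Continuous (g i)) (A : Fin (n + 1) → ℝ) (c : ℝ) :
    uniformError Q f g A < c ↔ ∀ x ∈ Q, |f x - modelFun g A x| < c :=
  hQ.sSup_lt_iff_of_continuous hQne (hf.sub (continuous_modelFun hg A)).abs.continuousOn c

theorem isCompact_Gplus (hQ : IsCompact Q) (hf : Continuous f) (hg : ∀ i, Continuous (g i))
    (A : Fin (n + 1) → ℝ) : IsCompact (Gplus Q f g A) :=
  (hQ.inter_right (isClosed_eq (hf.sub (continuous_modelFun hg A)) continuous_const)).image
    (continuous_gVec hg)

theorem isCompact_Gminus (hQ : IsCompact Q) (hf : Continuous f) (hg : ∀ i, Continuous (g i))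
    (A : Fin (n + 1) → ℝ) : IsCompact (Gminus Q f g A) :=
  (hQ.inter_right (isClosed_eq ((continuous_modelFun hg A).sub hf) continuous_const)).image
    (continuous_gVec hg)

theorem exists_modelFun_pos_neg_of_disjoint_convexHull (hQ : IsCompact Q) (hf : Continuous f)
    (hg : ∀ i, Continuous (g i)) {A : Fin (n + 1) → ℝ}
    (hA : Disjoint (convexHull ℝ (Gminus Q f g A)) (convexHull ℝ (Gplus Q f g A))) :
    ∃ B, (∀ x ∈ Eplus Q f g A, 0 < modelFun g B x) ∧ ∀ x ∈ Eminus Q f g A, modelFun g B x < 0 := by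
  obtain ⟨B, hneg, hpos⟩ := exists_dotProduct_neg_pos_of_disjoint_convexHull
    (isCompact_Gminus hQ hf hg A) (isCompact_Gplus hQ hf hg A) 0
    (by rintro _ ⟨x, -, rfl⟩; rfl) (by rintro _ ⟨x, -, rfl⟩; rfl) hA
  exact ⟨B, fun x hx => (modelFun_eq_dotProduct g B x).symm ▸ hpos _ ⟨x, hx, rfl⟩,
    fun x hx => (modelFun_eq_dotProduct g B x).symm ▸ hneg _ ⟨x, hx, rfl⟩⟩

theorem exists_uniformError_add_smul_lt (hQne : Q.Nonempty) (hQ : IsCompact Q)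
    (hf : Continuous f) (hg : ∀ i, Continuous (g i)) {A B : Fin (n + 1) → ℝ}
    (hBpos : ∀ x ∈ Eplus Q f g A, 0 < modelFun g B x)
    (hBneg : ∀ x ∈ Eminus Q f g A, modelFun g B x < 0) :
    ∃ ε : ℝ, uniformError Q f g (A + ε • B) < uniformError Q f g A := by
  obtain ⟨ε, hε⟩ := hQ.exists_forall_abs_sub_mul_lt (e := fun x => f x - modelFun g A x)
    (hf.sub (continuous_modelFun hg A)) (continuous_modelFun hg B) (fun x hx => abs_sub_modelFun_le_uniformError hQ hf hg A hx)
    (fun x hx hΨ => hBpos x ⟨hx, hΨ⟩) (fun x hx hΨ => hBneg x ⟨hx, by rwa [neg_sub] at hΨ⟩)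
  refine ⟨ε, (uniformError_lt_iff hQne hQ hf hg _ _).2 fun x hx => ?_⟩
  rw [modelFun_add_smul, ← sub_sub]
  exact hε x hx

end UniformApproximation

theorem optimal_imp_convexHulls_intersect_general
    (d n : ℕ)
    (Q : Set (Fin d → ℝ)) (hQne : Q.Nonempty) (hQc : IsCompact Q)
    (f : (Fin d → ℝ) → ℝ) (hf : Continuous f)
    (g : Fin n → (Fin d → ℝ) → ℝ) (hg : ∀ i, Continuous (g i))
    (Astar : Fin (n + 1) → ℝ)
    (hopt : ∀ A : Fin (n + 1) → ℝ, uniformError Q f g Astar ≤ uniformError Q f g A) :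
    (convexHull ℝ (Gplus Q f g Astar) ∩ convexHull ℝ (Gminus Q f g Astar)).Nonempty := by
  by_contra hempty
  have hdisj : Disjoint (convexHull ℝ (Gminus Q f g Astar)) (convexHull ℝ (Gplus Q f g Astar)) :=
    (disjoint_iff_inter_eq_empty.2 (not_nonempty_iff_eq_empty.1 hempty)).symm
  obtain ⟨B, hBpos, hBneg⟩ := exists_modelFun_pos_neg_of_disjoint_convexHull hQc hf hg hdisj
  obtain ⟨ε, hε⟩ := exists_uniformError_add_smul_lt hQne hQc hf hg hBpos hBneg
  exact (hopt _).not_gt hε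

/-- If `A*` is a global minimizer of `Ψ`, then the convex hulls of `G₊(A*)` and
`G₋(A*)` have nonempty intersection. -/
theorem optimal_imp_convexHulls_intersect
    (d n : ℕ) (hd : 1 ≤ d) (hn : 1 ≤ n)
    (Q : Set (Fin d → ℝ)) (hQne : Q.Nonempty) (hQc : IsCompact Q)
    (f : (Fin d → ℝ) → ℝ) (hf : Continuous f)
    (g : Fin n → (Fin d → ℝ) → ℝ) (hg : ∀ i, Continuous (g i))
    (Astar : Fin (n + 1) → ℝ)
    (hopt : ∀ A : Fin (n + 1) → ℝ, uniformError Q f g Astar ≤ uniformError Q f g A) :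
    (convexHull ℝ (Gplus Q f g Astar) ∩ convexHull ℝ (Gminus Q f g Astar)).Nonempty :=
  optimal_imp_convexHulls_intersect_general d n Q hQne hQc f hf g hg Astar hopt
end

section
/- Let Y = {u₁,…,u_p} and Z = {v₁,…,v_q} be finite sets of points in ℝ^n and let w ∈ ℝ^n. Assume relint(conv Y) ∩ relint(conv Z) ≠ ∅ and relint(conv(Y ∪ {w})) ∩ relint(conv Z) ≠ ∅. Then one of the points of Y ∪ Z can be removed while w is included into Y so that the convex hulls of the updated sets still intersect: there exists an index i₀ such that conv((Y ∖ {u_{i₀}}) ∪ {w}) ∩ conv(Z) ≠ ∅, or there exists an index j₀ such that conv(Y ∪ {w}) ∩ conv(Z ∖ {v_{j₀}}) ≠ ∅. -/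
/-!
Move a common point of two hulls along a ray for as long as it stays in both. A point of
`conv S` (`S` finite) with all barycentric weights positive can be moved a little in every
direction `a - b` with `a, b ∈ conv S`; so where the ray leaves, the point lies in the hull of
`S` with one point removed.

Take `y ∈ conv Y ∩ conv Z` and `x ∈ relint conv (Y ∪ {w}) ∩ conv Z`, and assume `w ∉ conv Z`.
If `x ≠ y`, follow the ray from `y` through `x`: the exit point drops a point of `Z`, a point of
`Y`, or `w`; in the last case it lies in `conv Y ∩ conv Z` and the ray is continued there.
If `x = y`, follow instead the ray from `w` through `x`, first in `conv (Y ∪ {w})` (possible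
because `x` is a relative interior point) and then, if `w` is dropped, in `conv Y`; `x` stays
on the segment from `w` to the exit point, which lies in the hull of `w` and `Y` minus a point.
-/

open Set Filter Topology

section Algebraic

variable {E : Type*} [AddCommGroup E] [Module ℝ E]

theorem sum_smul_mem_convexHull_diff_of_weight_eq_zero {S : Finset E} {μ : E → ℝ}
    (hμ₀ : ∀ y ∈ S, 0 ≤ μ y) (hμ₁ : ∑ y ∈ S, μ y = 1) {s : E} (hs : μ s = 0) :
    ∑ y ∈ S, μ y • y ∈ convexHull ℝ ((S \ {s} : Set E)) := by
  classical
  rw [← Finset.coe_erase, Finset.mem_convexHull']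
  refine ⟨μ, fun y hy => hμ₀ y (Finset.mem_of_mem_erase hy), ?_, ?_⟩
  · rwa [Finset.sum_erase _ hs]
  · rw [Finset.sum_erase _ (by rw [hs, zero_smul])]

theorem eventually_add_smul_sub_mem_convexHull {S : Set E} (hS : S.Finite) {m a b : E}
    (hm : m ∈ convexHull ℝ S) (hmS : ∀ s ∈ S, m ∉ convexHull ℝ (S \ {s}))
    (ha : a ∈ convexHull ℝ S) (hb : b ∈ convexHull ℝ S) :
    ∀ᶠ δ in 𝓝 (0 : ℝ), m + δ • (a - b) ∈ convexHull ℝ S := by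
  lift S to Finset E using hS
  obtain ⟨μ, hμ₀, hμ₁, rfl⟩ := Finset.mem_convexHull'.1 hm
  obtain ⟨α, -, hα₁, rfl⟩ := Finset.mem_convexHull'.1 ha
  obtain ⟨β, -, hβ₁, rfl⟩ := Finset.mem_convexHull'.1 hb
  have hμ_pos : ∀ s ∈ S, 0 < μ s := fun s hs => (hμ₀ s hs).lt_of_ne fun h =>
    hmS s hs (sum_smul_mem_convexHull_diff_of_weight_eq_zero hμ₀ hμ₁ h.symm)
  have hpos : ∀ᶠ δ in 𝓝 (0 : ℝ), ∀ s ∈ S, 0 ≤ μ s + δ * (α s - β s) := by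
    refine (eventually_all_finset S).2 fun s hs => ?_
    have hδ : Tendsto (fun δ : ℝ => μ s + δ * (α s - β s)) (𝓝 0) (𝓝 (μ s)) :=
      Continuous.tendsto' (by fun_prop) _ _ (by simp)
    exact (hδ.eventually_const_lt (hμ_pos s hs)).mono fun _ h => h.le
  filter_upwards [hpos] with δ hδ
  refine Finset.mem_convexHull'.2 ⟨fun s => μ s + δ * (α s - β s), hδ, ?_, ?_⟩
  · simp [Finset.sum_add_distrib, ← Finset.mul_sum, Finset.sum_sub_distrib, hμ₁, hα₁, hβ₁]
  · simp [add_smul, mul_smul, sub_smul, Finset.sum_add_distrib, Finset.sum_sub_distrib,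
      ← Finset.smul_sum, smul_sub]

theorem add_smul_sub_ne {a b : E} (hab : a ≠ b) {t : ℝ} (ht : 0 ≤ t) :
    a + t • (a - b) ≠ b := by
  rw [ne_eq, ← sub_eq_zero, show a + t • (a - b) - b = (1 + t) • (a - b) by module,
    smul_eq_zero, sub_eq_zero, not_or]
  exact ⟨by linarith, hab⟩

theorem mem_segment_add_smul_sub {x w a : E} (h : x ∈ segment ℝ w a) {t : ℝ} (ht : 0 ≤ t) :
    x ∈ segment ℝ w (a + t • (a - x)) := by
  rw [mem_segment_iff_sameRay] at h ⊢
  rw [show a + t • (a - x) - x = (1 + t) • (a - x) by module]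
  exact h.nonneg_smul_right (by linarith)

end Algebraic

section Topological

variable {E : Type*} [AddCommGroup E] [Module ℝ E] [TopologicalSpace E]
  [IsTopologicalAddGroup E] [ContinuousSMul ℝ E]

theorem eventually_add_smul_sub_mem_of_mem_intrinsicInterior {s : Set E} {x a b : E}
    (hx : x ∈ intrinsicInterior ℝ s) (ha : a ∈ s) (hb : b ∈ s) :
    ∀ᶠ δ in 𝓝 (0 : ℝ), x + δ • (a - b) ∈ s := by
  obtain ⟨y, hy, rfl⟩ := mem_intrinsicInterior.1 hx
  have hab : a - b ∈ (affineSpan ℝ s).direction :=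
    AffineSubspace.vsub_mem_direction (subset_affineSpan ℝ s ha) (subset_affineSpan ℝ s hb)
  let f : ℝ → affineSpan ℝ s := fun δ =>
    ⟨δ • (a - b) + (y : E), AffineSubspace.vadd_mem_of_mem_direction
      ((affineSpan ℝ s).direction.smul_mem δ hab) y.2⟩
  have hf : Continuous f := by fun_prop
  have hf0 : f 0 = y := by ext; simp [f]
  have hlim : Tendsto f (𝓝 0) (𝓝 y) := hf0 ▸ hf.tendsto 0
  filter_upwards [hlim.eventually (mem_interior_iff_mem_nhds.1 hy)] with δ hδ
  simpa [f, add_comm] using hδ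

variable [T2Space E]

theorem IsCompact.exists_forall_gt_add_smul_notMem {K : Set E} (hK : IsCompact K)
    {a d : E} (ha : a ∈ K) (hd : d ≠ 0) :
    ∃ t : ℝ, 0 ≤ t ∧ a + t • d ∈ K ∧ ∀ t' > t, a + t' • d ∉ K := by
  have hT : IsCompact (Ici 0 ∩ (fun t : ℝ => a + t • d) ⁻¹' K) :=
    (((Homeomorph.addLeft a).isClosedEmbedding.comp
      (isClosedEmbedding_smul_left hd)).isCompact_preimage hK).inter_left isClosed_Ici
  obtain ⟨ht₀, hK₀⟩ := hT.sSup_mem ⟨0, self_mem_Ici, by simpa using ha⟩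
  exact ⟨_, ht₀, hK₀, fun t' ht' hK' =>
    ht'.not_ge (le_csSup hT.bddAbove ⟨ht₀.trans ht'.le, hK'⟩)⟩

theorem exists_add_smul_sub_mem_convexHull_inter_diff {S T : Set E} (hS : S.Finite)
    (hT : T.Finite) {a b : E} (ha : a ∈ convexHull ℝ S ∩ convexHull ℝ T)
    (hb : b ∈ convexHull ℝ S ∩ convexHull ℝ T) (hab : a ≠ b) :
    ∃ t : ℝ, 0 ≤ t ∧ a + t • (a - b) ∈ convexHull ℝ S ∩ convexHull ℝ T ∧
      ((∃ s ∈ S, a + t • (a - b) ∈ convexHull ℝ (S \ {s})) ∨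
        ∃ s ∈ T, a + t • (a - b) ∈ convexHull ℝ (T \ {s})) := by
  obtain ⟨t, ht, ⟨hmS, hmT⟩, hlast⟩ :=
    ((hS.isCompact_convexHull ℝ).inter
      (hT.isCompact_convexHull ℝ)).exists_forall_gt_add_smul_notMem ha (sub_ne_zero.2 hab)
  refine ⟨t, ht, ⟨hmS, hmT⟩, ?_⟩
  by_contra! h
  have hmove := (eventually_add_smul_sub_mem_convexHull hS hmS h.1 ha.1 hb.1).and
    (eventually_add_smul_sub_mem_convexHull hT hmT h.2 ha.2 hb.2)
  obtain ⟨δ, ⟨hδS, hδT⟩, hδ⟩ :=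
    (hmove.filter_mono nhdsWithin_le_nhds |>.and (self_mem_nhdsWithin (s := Ioi 0))).exists
  refine hlast (t + δ) (lt_add_of_pos_right t hδ) ?_
  rw [add_smul, ← add_assoc]
  exact ⟨hδS, hδT⟩

theorem exists_add_smul_sub_mem_convexHull_diff {S : Set E} (hS : S.Finite) {a b : E}
    (ha : a ∈ convexHull ℝ S) (hb : b ∈ convexHull ℝ S) (hab : a ≠ b) :
    ∃ t : ℝ, 0 ≤ t ∧ ∃ s ∈ S, a + t • (a - b) ∈ convexHull ℝ (S \ {s}) := by
  obtain ⟨t, ht, -, h⟩ :=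
    exists_add_smul_sub_mem_convexHull_inter_diff hS hS ⟨ha, ha⟩ ⟨hb, hb⟩ hab
  exact ⟨t, ht, or_self_iff.1 h⟩

theorem exists_mem_convexHull_insert_diff {Y : Set E} (hY : Y.Finite) {w x : E}
    (hx : x ∈ intrinsicInterior ℝ (convexHull ℝ (insert w Y))) (hxY : x ∈ convexHull ℝ Y)
    (hxw : x ≠ w) : ∃ s ∈ Y, x ∈ convexHull ℝ (insert w (Y \ {s})) := by
  have hwA : w ∈ convexHull ℝ (insert w Y) := subset_convexHull ℝ _ (mem_insert w Y)
  have hxA : x ∈ convexHull ℝ (insert w Y) := convexHull_mono (subset_insert w Y) hxY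
  have hmove := eventually_add_smul_sub_mem_of_mem_intrinsicInterior hx hxA hwA
  obtain ⟨δ, hδA, hδ⟩ :=
    (hmove.filter_mono nhdsWithin_le_nhds |>.and (self_mem_nhdsWithin (s := Ioi 0))).exists
  have hseg : x ∈ segment ℝ w (x + δ • (x - w)) := by
    rw [mem_segment_iff_sameRay, add_sub_cancel_left]
    exact SameRay.sameRay_nonneg_smul_right _ hδ.le
  have hne : x + δ • (x - w) ≠ x := by
    simpa [sub_eq_zero, hδ.ne'] using hxw
  obtain ⟨t, ht, s, hs, hm⟩ := exists_add_smul_sub_mem_convexHull_diff (hY.insert w) hδA hxA hne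
  have hmx := add_smul_sub_ne hne ht
  have hxm := mem_segment_add_smul_sub hseg ht
  generalize x + δ • (x - w) + t • (x + δ • (x - w) - x) = m at hm hmx hxm
  have hconv : ∀ {T : Set E} {z : E}, x ∈ segment ℝ w z → z ∈ convexHull ℝ (insert w T) →
      x ∈ convexHull ℝ (insert w T) := fun hxz hz =>
    (convex_convexHull ℝ _).segment_subset (subset_convexHull ℝ _ (mem_insert w _)) hz hxz
  rcases eq_or_ne w s with rfl | hws
  · -- the dropped point is `w`, so `m ∈ conv Y`: continue the ray there
    have hmY : m ∈ convexHull ℝ Y :=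
      convexHull_mono (sdiff_singleton_subset_iff.2 subset_rfl) hm
    obtain ⟨t', ht', s', hs', hm'⟩ := exists_add_smul_sub_mem_convexHull_diff hY hmY hxY hmx
    exact ⟨s', hs', hconv (mem_segment_add_smul_sub hxm ht')
      (convexHull_mono (subset_insert w _) hm')⟩
  · exact ⟨s, hs.resolve_left hws.symm, hconv hxm (convexHull_mono insert_sdiff_subset hm)⟩

theorem exists_exchange_of_ne {Y Z : Set E} (hY : Y.Finite) (hZ : Z.Finite) {w x y : E}
    (hx : x ∈ convexHull ℝ (insert w Y) ∩ convexHull ℝ Z)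
    (hy : y ∈ convexHull ℝ Y ∩ convexHull ℝ Z) (hxy : x ≠ y) :
    (∃ s ∈ Y, (convexHull ℝ (insert w (Y \ {s})) ∩ convexHull ℝ Z).Nonempty) ∨
      ∃ s ∈ Z, (convexHull ℝ (insert w Y) ∩ convexHull ℝ (Z \ {s})).Nonempty := by
  have hyA : y ∈ convexHull ℝ (insert w Y) := convexHull_mono (subset_insert w Y) hy.1
  obtain ⟨t, ht, ⟨hmA, hmZ⟩, ⟨s, hs, hm⟩ | ⟨s, hs, hm⟩⟩ :=
    exists_add_smul_sub_mem_convexHull_inter_diff (hY.insert w) hZ hx ⟨hyA, hy.2⟩ hxy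
  · rcases eq_or_ne w s with rfl | hws
    · -- the dropped point is `w`, so `m ∈ conv Y ∩ conv Z`: continue the ray there
      have hmY := convexHull_mono (sdiff_singleton_subset_iff.2 subset_rfl) hm
      obtain ⟨t', -, ⟨hmY', hmZ'⟩, ⟨s', hs', hm'⟩ | ⟨s', hs', hm'⟩⟩ :=
        exists_add_smul_sub_mem_convexHull_inter_diff hY hZ ⟨hmY, hmZ⟩ hy
          (add_smul_sub_ne hxy ht)
      · exact Or.inl ⟨s', hs', _, convexHull_mono (subset_insert w _) hm', hmZ'⟩
      · exact Or.inr ⟨s', hs', _, convexHull_mono (subset_insert w _) hmY', hm'⟩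
    · exact Or.inl
        ⟨s, hs.resolve_left hws.symm, _, convexHull_mono insert_sdiff_subset hm, hmZ⟩
  · exact Or.inr ⟨s, hs, _, hmA, hm⟩

theorem exists_exchange_of_mem_intrinsicInterior {Y Z : Set E} (hY : Y.Finite) (hZ : Z.Finite)
    {w x y : E} (hy : y ∈ convexHull ℝ Y ∩ convexHull ℝ Z)
    (hx : x ∈ intrinsicInterior ℝ (convexHull ℝ (insert w Y))) (hxZ : x ∈ convexHull ℝ Z) :
    (∃ s ∈ Y, (convexHull ℝ (insert w (Y \ {s})) ∩ convexHull ℝ Z).Nonempty) ∨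
      ∃ s ∈ Z, (convexHull ℝ (insert w Y) ∩ convexHull ℝ (Z \ {s})).Nonempty := by
  by_cases hwZ : w ∈ convexHull ℝ Z
  · obtain ⟨s, hs⟩ := convexHull_nonempty_iff.1 ⟨y, hy.1⟩
    exact Or.inl ⟨s, hs, w, subset_convexHull ℝ _ (mem_insert w _), hwZ⟩
  rcases eq_or_ne x y with rfl | hxy
  · obtain ⟨s, hs, hxs⟩ :=
      exists_mem_convexHull_insert_diff hY hx hy.1 (ne_of_mem_of_not_mem hxZ hwZ)
    exact Or.inl ⟨s, hs, x, hxs, hxZ⟩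
  · exact exists_exchange_of_ne hY hZ ⟨intrinsicInterior_subset hx, hxZ⟩ hy hxy

end Topological

theorem exchange_point_preserves_intersection_general
    (n p q : ℕ)
    (u : Fin p → (Fin n → ℝ)) (v : Fin q → (Fin n → ℝ)) (w : Fin n → ℝ)
    (h1 : (intrinsicInterior ℝ (convexHull ℝ (Set.range u)) ∩
      intrinsicInterior ℝ (convexHull ℝ (Set.range v))).Nonempty)
    (h2 : (intrinsicInterior ℝ (convexHull ℝ (insert w (Set.range u))) ∩
      intrinsicInterior ℝ (convexHull ℝ (Set.range v))).Nonempty) :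
    (∃ i₀ : Fin p,
      (convexHull ℝ ((Set.range u \ {u i₀}) ∪ {w}) ∩
        convexHull ℝ (Set.range v)).Nonempty) ∨
    (∃ j₀ : Fin q,
      (convexHull ℝ (Set.range u ∪ {w}) ∩
        convexHull ℝ (Set.range v \ {v j₀})).Nonempty) := by
  obtain ⟨y, hyY, hyZ⟩ := h1
  obtain ⟨x, hx, hxZ⟩ := h2
  simpa only [union_singleton, exists_range_iff] using
    exists_exchange_of_mem_intrinsicInterior (finite_range u) (finite_range v)
      ⟨intrinsicInterior_subset hyY, intrinsicInterior_subset hyZ⟩ hx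
      (intrinsicInterior_subset hxZ)

/-- If `relint(conv Y) ∩ relint(conv Z) ≠ ∅` and `relint(conv(Y ∪ {w})) ∩ relint(conv Z) ≠ ∅`,
then one point of `Y ∪ Z` can be removed while `w` is included into `Y` so that the convex
hulls of the updated sets still intersect. -/
theorem exchange_point_preserves_intersection
    (n p q : ℕ) (hn : 1 ≤ n)
    (u : Fin p → (Fin n → ℝ)) (v : Fin q → (Fin n → ℝ)) (w : Fin n → ℝ)
    (h1 : (intrinsicInterior ℝ (convexHull ℝ (Set.range u)) ∩
      intrinsicInterior ℝ (convexHull ℝ (Set.range v))).Nonempty)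
    (h2 : (intrinsicInterior ℝ (convexHull ℝ (insert w (Set.range u))) ∩
      intrinsicInterior ℝ (convexHull ℝ (Set.range v))).Nonempty) :
    (∃ i₀ : Fin p,
      (convexHull ℝ ((Set.range u \ {u i₀}) ∪ {w}) ∩
        convexHull ℝ (Set.range v)).Nonempty) ∨
    (∃ j₀ : Fin q,
      (convexHull ℝ (Set.range u ∪ {w}) ∩
        convexHull ℝ (Set.range v \ {v j₀})).Nonempty) :=
  exchange_point_preserves_intersection_general n p q u v w h1 h2
end
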